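/- Let \(A\) be the \((p+4) \times (p+4)\) intersection matrix of the plumbing graph described above (chain of \(-2\)'s with one \(-3\) and one branch vertex). Then \(A\) is negative definite. -/
import Mathlib


/-- Intersection matrix of the plumbing graph: vertices `0, …, p+3` (0-based; vertex
`k` corresponds to `v_{k+1}`), a chain `0 — 1 — ⋯ — (p+2)` together with the extra
vertex `p+3` joined to vertex `p` (the vertex `v_{p+1}`); all self-intersections are
`-2` except vertex `p`, which has self-intersection `-3`. -/
def plumbA (p : ℕ) : Matrix (Fin (p+4)) (Fin (p+4)) ℤ := fun i j =>
  if (i : ℕ) = (j : ℕ) then (if (i : ℕ) = p then -3 else -2)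
  else if ((i : ℕ) + 1 = (j : ℕ) ∧ (j : ℕ) ≤ p + 2) ∨
          ((j : ℕ) + 1 = (i : ℕ) ∧ (i : ℕ) ≤ p + 2) ∨
          ((i : ℕ) = p ∧ (j : ℕ) = p + 3) ∨ ((i : ℕ) = p + 3 ∧ (j : ℕ) = p)
    then 1 else 0

/-- Natural-number version of the plumbing matrix entries, valued in `ℝ`. -/
def pb (p : ℕ) : ℕ → ℕ → ℝ := fun i j =>
  if i = j then (if i = p then -3 else -2)
  else if (i + 1 = j ∧ j ≤ p + 2) ∨ (j + 1 = i ∧ i ≤ p + 2) ∨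
          (i = p ∧ j = p + 3) ∨ (i = p + 3 ∧ j = p) then 1 else 0

lemma pb_eq (p i j : ℕ) : pb p i j =
    (if i = j then (if i = p then (-3:ℝ) else -2) else 0)
    + (if i + 1 = j ∧ j ≤ p + 2 then (1:ℝ) else 0)
    + (if j + 1 = i ∧ i ≤ p + 2 then (1:ℝ) else 0)
    + (if i = p ∧ j = p + 3 then (1:ℝ) else 0)
    + (if i = p + 3 ∧ j = p then (1:ℝ) else 0) := by
  unfold pb
  split_ifs <;> first | (exfalso; omega) | norm_num

lemma Tdiag (p : ℕ) (y : ℕ → ℝ) :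
    ∑ i ∈ Finset.range (p+4), ∑ j ∈ Finset.range (p+4),
      y i * (if i = j then (if i = p then (-3:ℝ) else -2) else 0) * y j
    = ∑ i ∈ Finset.range (p+4), (if i = p then (-3:ℝ) else -2) * y i ^ 2 := by
  refine Finset.sum_congr rfl fun i hi => ?_
  rw [Finset.sum_eq_single i]
  · rw [if_pos rfl]; ring
  · intro j _ hne
    rw [if_neg (fun h => hne h.symm)]; ring
  · intro h; exact absurd hi h

lemma Tchain (p : ℕ) (y z : ℕ → ℝ) :
    ∑ i ∈ Finset.range (p+4), ∑ j ∈ Finset.range (p+4),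
      y i * (if i + 1 = j ∧ j ≤ p + 2 then (1:ℝ) else 0) * z j
    = ∑ i ∈ Finset.range (p+2), y i * z (i+1) := by
  have inner : ∀ i ∈ Finset.range (p+4),
      (∑ j ∈ Finset.range (p+4), y i * (if i + 1 = j ∧ j ≤ p + 2 then (1:ℝ) else 0) * z j)
      = if i < p+2 then y i * z (i+1) else 0 := by
    intro i _
    by_cases h : i < p + 2
    · rw [Finset.sum_eq_single (i+1)]
      · rw [if_pos ⟨rfl, by omega⟩, if_pos h]; ring
      · intro j _ hne
        rw [if_neg (fun hc => hne hc.1.symm)]; ring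
      · intro hmem; exact absurd (Finset.mem_range.2 (by omega)) hmem
    · rw [if_neg h, Finset.sum_eq_zero]
      intro j _
      rw [if_neg (fun hc => by omega)]; ring
  rw [Finset.sum_congr rfl inner]
  rw [← Finset.sum_subset (Finset.range_subset_range.2 (show p+2 ≤ p+4 by omega))
      (fun x hx hnx => if_neg (by simp only [Finset.mem_range] at hnx; omega))]
  exact Finset.sum_congr rfl fun i hi => if_pos (Finset.mem_range.1 hi)

lemma Tpoint (p a c : ℕ) (ha : a < p+4) (hc : c < p+4) (y z : ℕ → ℝ) :
    ∑ i ∈ Finset.range (p+4), ∑ j ∈ Finset.range (p+4),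
      y i * (if i = a ∧ j = c then (1:ℝ) else 0) * z j = y a * z c := by
  rw [Finset.sum_eq_single a]
  · rw [Finset.sum_eq_single c]
    · rw [if_pos ⟨rfl, rfl⟩]; ring
    · intro j _ hne; rw [if_neg (fun h => hne h.2)]; ring
    · intro h; exact absurd (Finset.mem_range.2 hc) h
  · intro i _ hne
    rw [Finset.sum_eq_zero]
    intro j _; rw [if_neg (fun h => hne h.1)]; ring
  · intro h; exact absurd (Finset.mem_range.2 ha) h

lemma sum_decomp (p : ℕ) (y : ℕ → ℝ) :
    ∑ i ∈ Finset.range (p+4), ∑ j ∈ Finset.range (p+4), y i * pb p i j * y j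
    = (∑ i ∈ Finset.range (p+4), (if i = p then (-3:ℝ) else -2) * y i ^ 2)
      + 2 * (∑ i ∈ Finset.range (p+2), y i * y (i+1)) + 2 * (y p * y (p+3)) := by
  have expand : ∀ i j : ℕ, y i * pb p i j * y j =
      y i * (if i = j then (if i = p then (-3:ℝ) else -2) else 0) * y j
      + y i * (if i + 1 = j ∧ j ≤ p + 2 then (1:ℝ) else 0) * y j
      + y i * (if j + 1 = i ∧ i ≤ p + 2 then (1:ℝ) else 0) * y j
      + y i * (if i = p ∧ j = p + 3 then (1:ℝ) else 0) * y j
      + y i * (if i = p + 3 ∧ j = p then (1:ℝ) else 0) * y j := by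
    intro i j; rw [pb_eq]; ring
  simp only [expand, Finset.sum_add_distrib]
  have T2 : ∑ i ∈ Finset.range (p+4), ∑ j ∈ Finset.range (p+4),
      y i * (if j + 1 = i ∧ i ≤ p + 2 then (1:ℝ) else 0) * y j
      = ∑ i ∈ Finset.range (p+2), y i * y (i+1) := by
    rw [Finset.sum_comm]
    have comm : ∀ j ∈ Finset.range (p+4), ∀ i ∈ Finset.range (p+4),
        y i * (if j + 1 = i ∧ i ≤ p + 2 then (1:ℝ) else 0) * y j
        = y j * (if j + 1 = i ∧ i ≤ p + 2 then (1:ℝ) else 0) * y i :=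
      fun _ _ _ _ => by ring
    rw [Finset.sum_congr rfl fun j hj => Finset.sum_congr rfl fun i hi => comm j hj i hi]
    exact Tchain p y y
  rw [Tdiag, Tchain, T2, Tpoint p p (p+3) (by omega) (by omega),
      Tpoint p (p+3) p (by omega) (by omega)]
  ring

lemma key (p : ℕ) (y : ℕ → ℝ) :
    ∑ i ∈ Finset.range (p+4), ∑ j ∈ Finset.range (p+4), y i * pb p i j * y j
    = -((y 0)^2 + (∑ i ∈ Finset.range (p+2), (y i - y (i+1))^2) + (y (p+2))^2
        + (y p - y (p+3))^2 + (y (p+3))^2) := by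
  rw [sum_decomp]
  have h1 : ∑ i ∈ Finset.range (p+4), (if i = p then (-3:ℝ) else -2) * y i ^ 2
      = -2 * ∑ i ∈ Finset.range (p+4), y i ^ 2 - y p ^ 2 := by
    have e : ∀ i : ℕ, (if i = p then (-3:ℝ) else -2) * y i ^ 2
        = -2 * y i ^ 2 + (if i = p then -(y i ^ 2) else 0) := by
      intro i; split_ifs <;> ring
    simp only [e, Finset.sum_add_distrib]
    rw [Finset.sum_ite_eq' (Finset.range (p+4)) p (fun i => -(y i ^ 2)),
        if_pos (Finset.mem_range.2 (by omega)), ← Finset.mul_sum]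
    ring
  have h2 : ∑ i ∈ Finset.range (p+2), (y i - y (i+1))^2
      = ∑ i ∈ Finset.range (p+2), y i ^ 2 + ∑ i ∈ Finset.range (p+2), y (i+1) ^ 2
        - 2 * ∑ i ∈ Finset.range (p+2), y i * y (i+1) := by
    rw [Finset.mul_sum, ← Finset.sum_add_distrib, ← Finset.sum_sub_distrib]
    refine Finset.sum_congr rfl fun i _ => ?_; ring
  have h3 : ∑ i ∈ Finset.range (p+2), y (i+1) ^ 2
      = ∑ i ∈ Finset.range (p+2), y i ^ 2 + y (p+2) ^ 2 - y 0 ^ 2 := by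
    have a1 := Finset.sum_range_succ' (fun i => y i ^ 2) (p+2)
    have a2 := Finset.sum_range_succ (fun i => y i ^ 2) (p+2)
    linarith
  have h4 : ∑ i ∈ Finset.range (p+4), y i ^ 2
      = ∑ i ∈ Finset.range (p+2), y i ^ 2 + y (p+2) ^ 2 + y (p+3) ^ 2 := by
    have b1 := Finset.sum_range_succ (fun i => y i ^ 2) (p+3)
    have b2 := Finset.sum_range_succ (fun i => y i ^ 2) (p+2)
    have : p + 4 = p + 3 + 1 := by omega
    rw [this]
    have : p + 3 = p + 2 + 1 := by omega
    rw [this] at b1 ⊢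
    rw [Finset.sum_range_succ, Finset.sum_range_succ]
  rw [h1, h4, h2, h3]
  ring


/-- the intersection matrix `A` of the plumbing graph (a chain of
`-2`-vertices with one `-3`-vertex at position `p+1` and a `-2`-branch vertex
attached to it) is negative definite: `xᵀ A x < 0` for every nonzero real `x`. -/
theorem stmt_8 (p : ℕ) (hp : 3 ≤ p) :
    ∀ x : Fin (p+4) → ℝ, x ≠ 0 →
      ∑ i : Fin (p+4), ∑ j : Fin (p+4), x i * (plumbA p i j : ℝ) * x j < 0 := by
  intro x hx
  classical
  set y : ℕ → ℝ := fun k => if h : k < p + 4 then x ⟨k, h⟩ else 0 with hy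
  have hyx : ∀ i : Fin (p+4), y (i : ℕ) = x i := by
    intro i; simp [hy, i.isLt]
  have hconv : (∑ i : Fin (p+4), ∑ j : Fin (p+4), x i * (plumbA p i j : ℝ) * x j)
      = ∑ i ∈ Finset.range (p+4), ∑ j ∈ Finset.range (p+4), y i * pb p i j * y j := by
    rw [← Fin.sum_univ_eq_sum_range (fun i => ∑ j ∈ Finset.range (p+4), y i * pb p i j * y j)]
    refine Finset.sum_congr rfl fun i _ => ?_
    rw [← Fin.sum_univ_eq_sum_range (fun j => y (i : ℕ) * pb p (i : ℕ) j * y j)]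
    refine Finset.sum_congr rfl fun j _ => ?_
    rw [hyx i, hyx j]
    congr 1
    congr 1
    show ((plumbA p i j : ℤ) : ℝ) = pb p (i : ℕ) (j : ℕ)
    simp only [plumbA, pb]
    split_ifs <;> norm_num
  rw [hconv, key p y]
  have hd : (0:ℝ) ≤ ∑ i ∈ Finset.range (p+2), (y i - y (i+1))^2 :=
    Finset.sum_nonneg fun i _ => sq_nonneg _
  by_contra hcon
  push_neg at hcon
  have hA : (y 0)^2 + (∑ i ∈ Finset.range (p+2), (y i - y (i+1))^2) + (y (p+2))^2
      + (y p - y (p+3))^2 + (y (p+3))^2 ≤ 0 := by linarith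
  have h0 : y 0 = 0 := by
    have h' : y 0 ^ 2 ≤ 0 := by
      nlinarith [sq_nonneg (y (p+2)), sq_nonneg (y p - y (p+3)), sq_nonneg (y (p+3)), hd]
    have := le_antisymm h' (sq_nonneg _)
    exact pow_eq_zero_iff (two_ne_zero) |>.mp this
  have hdsum : ∑ i ∈ Finset.range (p+2), (y i - y (i+1))^2 = 0 := by
    have h' : ∑ i ∈ Finset.range (p+2), (y i - y (i+1))^2 ≤ 0 := by
      nlinarith [sq_nonneg (y 0), sq_nonneg (y (p+2)), sq_nonneg (y p - y (p+3)),
        sq_nonneg (y (p+3))]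
    exact le_antisymm h' hd
  have hdiff : ∀ i ∈ Finset.range (p+2), (y i - y (i+1))^2 = 0 :=
    (Finset.sum_eq_zero_iff_of_nonneg (fun i _ => sq_nonneg _)).mp hdsum
  have hlast : y (p+3) = 0 := by
    have h' : y (p+3) ^ 2 ≤ 0 := by
      nlinarith [sq_nonneg (y 0), sq_nonneg (y (p+2)), sq_nonneg (y p - y (p+3)), hd]
    have := le_antisymm h' (sq_nonneg _)
    exact pow_eq_zero_iff (two_ne_zero) |>.mp this
  have hchain : ∀ k, k ≤ p + 2 → y k = 0 := by
    intro k
    induction k with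
    | zero => intro _; exact h0
    | succ k ih =>
      intro hk
      have hk' : k ∈ Finset.range (p+2) := Finset.mem_range.2 (by omega)
      have hz := hdiff k hk'
      have hsub : y k - y (k+1) = 0 := pow_eq_zero_iff (two_ne_zero) |>.mp hz
      have := ih (by omega)
      linarith
  apply hx
  funext i
  have hyi : y (i : ℕ) = x i := hyx i
  have hi := i.isLt
  show x i = 0
  rw [← hyi]
  by_cases h : (i : ℕ) ≤ p + 2
  · exact hchain _ h
  · have : (i : ℕ) = p + 3 := by omega
    rw [this]; exact hlast
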